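/- Let n ≥ 1 and ω = e^{iπ/n}, and let M_count be the n × n lower triangular all-ones matrix (M[i,j] = 1 for i ≥ j, 0 otherwise). Then the factorization norm γ₂(M_count) := inf { ‖B‖_{2→∞} ‖C‖_{1→2} : BC = M_count } satisfies γ₂(M_count) ≤ 1/2 + (1/(2n)) ∑_{ℓ=1}^{n} |csc((2ℓ-1)π/(2n))|. -/

import Mathlib

open Complex Finset
noncomputable def rowNorm {ι κ 𝕜 : Type*} [Fintype κ] [SeminormedAddCommGroup 𝕜]
    (B : Matrix ι κ 𝕜) : ℝ :=
  ⨆ i, Real.sqrt (∑ j, ‖B i j‖ ^ 2)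

noncomputable def colNorm {ι κ 𝕜 : Type*} [Fintype ι] [SeminormedAddCommGroup 𝕜]
    (C : Matrix ι κ 𝕜) : ℝ :=
  ⨆ j, Real.sqrt (∑ i, ‖C i j‖ ^ 2)

/-- The γ₂ factorization norm: infimum of `rowNorm B * colNorm C` over all
complex factorizations `M = B * C`. -/
noncomputable def gamma2 {n : ℕ} (M : Matrix (Fin n) (Fin n) ℂ) : ℝ :=
  sInf {r : ℝ | ∃ m : ℕ, ∃ B : Matrix (Fin n) (Fin m) ℂ, ∃ C : Matrix (Fin m) (Fin n) ℂ,
    B * C = M ∧ r = rowNorm B * colNorm C}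

namespace Stmt8Aux

noncomputable def w (n : ℕ) : ℂ := Complex.exp (Real.pi * Complex.I / n)

noncomputable def c (n : ℕ) (ℓ : ℕ) : ℂ := (2 / n) / (1 - w n ^ (-(2 * (ℓ:ℤ) + 1)))

noncomputable def s (n : ℕ) (ℓ : ℕ) : ℝ :=
  (1 / n) / Real.sin ((2 * ℓ + 1) * Real.pi / (2 * n))

lemma w_ne_zero (n : ℕ) : w n ≠ 0 := Complex.exp_ne_zero _

lemma w_zpow (n : ℕ) (k : ℤ) : w n ^ k = Complex.exp (k * (Real.pi * Complex.I / n)) := by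
  rw [w, ← Complex.exp_int_mul]

lemma norm_w_zpow (n : ℕ) (k : ℤ) : ‖w n ^ k‖ = 1 := by
  rw [w_zpow]
  have : (k : ℂ) * (Real.pi * Complex.I / n) = ((k * Real.pi / n : ℝ) : ℂ) * Complex.I := by
    push_cast; ring
  rw [this]
  exact Complex.norm_exp_ofReal_mul_I _

lemma piI_ne_zero : (Real.pi : ℂ) * Complex.I ≠ 0 :=
  mul_ne_zero (Complex.ofReal_ne_zero.mpr Real.pi_ne_zero) Complex.I_ne_zero

lemma w_zpow_eq_one_iff (n : ℕ) (hn : 0 < n) (m : ℤ) :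
    w n ^ m = 1 ↔ (2 * (n:ℤ)) ∣ m := by
  have hne : (n : ℂ) ≠ 0 := Nat.cast_ne_zero.mpr hn.ne'
  rw [w_zpow, Complex.exp_eq_one_iff]
  constructor
  · rintro ⟨k, hk⟩
    have h2 : (m : ℂ) * (Real.pi * Complex.I) = (2 * n * k) * (Real.pi * Complex.I) := by
      field_simp at hk
      linear_combination (↑Real.pi * Complex.I) * hk
    have h3 := mul_right_cancel₀ piI_ne_zero h2
    exact ⟨k, by exact_mod_cast h3⟩
  · rintro ⟨k, rfl⟩
    refine ⟨k, ?_⟩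
    field_simp
    ring
    simp

lemma w_pow_n (n : ℕ) (hn : 0 < n) : w n ^ (n : ℤ) = -1 := by
  have hne : (n : ℂ) ≠ 0 := Nat.cast_ne_zero.mpr hn.ne'
  rw [w_zpow]
  rw [show ((n:ℤ) : ℂ) * (Real.pi * Complex.I / n) = Real.pi * Complex.I by
    push_cast; field_simp]
  exact Complex.exp_pi_mul_I

lemma sin_pos (n : ℕ) (hn : 0 < n) (ℓ : ℕ) (hℓ : ℓ < n) :
    0 < Real.sin ((2 * ℓ + 1) * Real.pi / (2 * n)) := by
  apply Real.sin_pos_of_pos_of_lt_pi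
  · have := Real.pi_pos
    positivity
  · rw [div_lt_iff₀ (by positivity)]
    have := Real.pi_pos
    have h1 : (2 * (ℓ:ℝ) + 1) < 2 * n := by
      have : (ℓ:ℝ) + 1 ≤ n := by exact_mod_cast hℓ
      linarith
    nlinarith

lemma s_pos (n : ℕ) (hn : 0 < n) (ℓ : ℕ) (hℓ : ℓ < n) : 0 < s n ℓ := by
  have := sin_pos n hn ℓ hℓ
  have hn' : (0:ℝ) < n := by exact_mod_cast hn
  unfold s
  positivity

lemma geom_inner (n : ℕ) (hn : 0 < n) (e : ℤ) (h1 : -(2 * (n:ℤ)) < e) (h2 : e < n) :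
    ∑ ℓ : Fin n, w n ^ ((2 * (ℓ:ℤ) + 1) * e) =
      if e = 0 then (n:ℂ) else if e = -(n:ℤ) then -(n:ℂ) else 0 := by
  have hw := w_ne_zero n
  have hn' : (0:ℤ) < n := by exact_mod_cast hn
  have key : ∀ ℓ : Fin n, w n ^ ((2 * (ℓ:ℤ) + 1) * e)
      = w n ^ e * (w n ^ (2 * e)) ^ ((ℓ:ℕ)) := by
    intro ℓ
    rw [← zpow_natCast (w n ^ (2 * e)) (ℓ:ℕ), ← zpow_mul, ← zpow_add₀ hw]
    congr 1
    push_cast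
    ring
  simp only [key]
  rw [← Finset.mul_sum,
    Fin.sum_univ_eq_sum_range (fun t => (w n ^ (2 * e)) ^ t) n]
  by_cases hr : w n ^ (2 * e) = 1
  · obtain ⟨k, hk⟩ := (w_zpow_eq_one_iff n hn (2 * e)).mp hr
    have h2e : 2 * e = 2 * ((n:ℤ) * k) := by linear_combination hk
    have hq : e = (n:ℤ) * k := by linarith
    rw [hq] at h1 h2
    have hu : k < 1 := by
      have : (n:ℤ) * k < (n:ℤ) * 1 := by linarith
      exact (mul_lt_mul_iff_right₀ hn').mp this
    have hl : (-2:ℤ) < k := by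
      have : (n:ℤ) * (-2) < (n:ℤ) * k := by linarith
      exact (mul_lt_mul_iff_right₀ hn').mp this
    have hk' : k = 0 ∨ k = -1 := by omega
    rcases hk' with h | h
    · subst h
      rw [mul_zero] at hq
      subst hq
      simp [hr]
    · subst h
      have he : e = -(n:ℤ) := by rw [hq]; ring
      subst he
      have hne : -(n:ℤ) ≠ 0 := by omega
      rw [if_neg hne, if_pos rfl]
      simp only [hr, one_pow, Finset.sum_const, Finset.card_range, nsmul_eq_mul, mul_one]
      have hwn : w n ^ (-(n:ℤ)) = -1 := by
        rw [zpow_neg, w_pow_n n hn]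
        norm_num
      rw [hwn]
      ring
  · have he0 : e ≠ 0 := by
      rintro rfl
      exact hr (by norm_num)
    have hen : e ≠ -(n:ℤ) := by
      rintro rfl
      apply hr
      rw [w_zpow_eq_one_iff n hn]
      exact ⟨-1, by ring⟩
    rw [if_neg he0, if_neg hen, geom_sum_eq hr]
    have hrn : (w n ^ (2 * e)) ^ n = 1 := by
      rw [← zpow_natCast, ← zpow_mul, w_zpow_eq_one_iff n hn]
      exact ⟨e, by ring⟩
    rw [hrn, sub_self, zero_div, mul_zero]

lemma c_eq_sum (n : ℕ) (hn : 0 < n) (ℓ : ℕ) :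
    c n ℓ = (1 / (n:ℂ)) * ∑ t : Fin n, w n ^ (-(2 * (ℓ:ℤ) + 1) * (t:ℤ)) := by
  have hw := w_ne_zero n
  have hne : (n : ℂ) ≠ 0 := Nat.cast_ne_zero.mpr hn.ne'
  have hr1 : w n ^ (-(2 * (ℓ:ℤ) + 1)) ≠ 1 := by
    intro h
    obtain ⟨k, hk⟩ := (w_zpow_eq_one_iff n hn _).mp h
    have h2 : 2 * ((n:ℤ) * k) = -(2 * (ℓ:ℤ) + 1) := by linear_combination -hk
    generalize (n:ℤ) * k = m at h2
    omega
  have hterm : ∀ t : Fin n, w n ^ (-(2 * (ℓ:ℤ) + 1) * (t:ℤ))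
      = (w n ^ (-(2 * (ℓ:ℤ) + 1))) ^ ((t:ℕ)) := by
    intro t
    rw [← zpow_natCast (w n ^ (-(2 * (ℓ:ℤ) + 1))) (t:ℕ), ← zpow_mul]
  simp only [hterm]
  rw [Fin.sum_univ_eq_sum_range (fun t => (w n ^ (-(2 * (ℓ:ℤ) + 1))) ^ t) n,
    geom_sum_eq hr1]
  have hrn : (w n ^ (-(2 * (ℓ:ℤ) + 1))) ^ n = -1 := by
    rw [← zpow_natCast, ← zpow_mul, mul_comm, zpow_mul, w_pow_n n hn]
    exact Odd.neg_one_zpow ⟨-(ℓ:ℤ) - 1, by ring⟩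
  rw [hrn]
  unfold c
  rw [show (-1 : ℂ) - 1 = -2 by norm_num,
    show (w n ^ (-(2 * (ℓ:ℤ) + 1)) - 1) = -(1 - w n ^ (-(2 * (ℓ:ℤ) + 1))) by ring,
    neg_div_neg_eq]
  ring


lemma sum_ind (n : ℕ) (a : ℤ) (X : ℂ) :
    ∑ t : Fin n, (if (t:ℤ) = a then X else 0) = if 0 ≤ a ∧ a < n then X else 0 := by
  by_cases h : 0 ≤ a ∧ a < n
  · rw [if_pos h]
    have ha : a.toNat < n := by omega
    rw [Finset.sum_eq_single (⟨a.toNat, ha⟩ : Fin n)]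
    · rw [if_pos (by simp; omega)]
    · intro t _ ht
      rw [if_neg]
      intro hta
      apply ht
      apply Fin.ext
      simp only [Fin.val_mk]
      omega
    · intro hmem
      exact absurd (Finset.mem_univ _) hmem
  · rw [if_neg h]
    apply Finset.sum_eq_zero
    intro t _
    rw [if_neg]
    have := t.isLt
    omega

lemma fourier (n : ℕ) (hn : 0 < n) (d : ℤ) (h1 : -(n:ℤ) < d) (h2 : d < n) :
    ∑ ℓ : Fin n, c n (ℓ:ℕ) * w n ^ ((2 * (ℓ:ℤ) + 1) * d) =
      if 0 ≤ d then 1 else -1 := by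
  have hw := w_ne_zero n
  have hne : (n : ℂ) ≠ 0 := Nat.cast_ne_zero.mpr hn.ne'
  have step1 : ∀ ℓ : Fin n, c n (ℓ:ℕ) * w n ^ ((2 * (ℓ:ℤ) + 1) * d)
      = (1 / (n:ℂ)) * ∑ t : Fin n, w n ^ ((2 * (ℓ:ℤ) + 1) * (d - (t:ℤ))) := by
    intro ℓ
    rw [c_eq_sum n hn (ℓ:ℕ), mul_assoc, Finset.sum_mul]
    congr 1
    apply Finset.sum_congr rfl
    intro t _
    rw [← zpow_add₀ hw]
    congr 1
    push_cast
    ring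
  simp only [step1]
  rw [← Finset.mul_sum, Finset.sum_comm]
  have step2 : ∀ t : Fin n, ∑ ℓ : Fin n, w n ^ ((2 * (ℓ:ℤ) + 1) * (d - (t:ℤ)))
      = (if (t:ℤ) = d then (n:ℂ) else 0) + (if (t:ℤ) = d + n then -(n:ℂ) else 0) := by
    intro t
    have ht := t.isLt
    rw [geom_inner n hn (d - (t:ℤ)) (by omega) (by omega)]
    by_cases h0 : d - (t:ℤ) = 0
    · rw [if_pos h0, if_pos (by omega), if_neg (by omega)]
      ring
    · rw [if_neg h0]
      by_cases hmn : d - (t:ℤ) = -(n:ℤ)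
      · rw [if_pos hmn, if_neg (by omega), if_pos (by omega)]
        ring
      · rw [if_neg hmn, if_neg (by omega), if_neg (by omega)]
        ring
  simp only [step2]
  rw [Finset.sum_add_distrib, sum_ind n d (n:ℂ), sum_ind n (d + n) (-(n:ℂ))]
  by_cases hd : 0 ≤ d
  · rw [if_pos hd, if_pos ⟨hd, h2⟩, if_neg (by omega)]
    field_simp
    ring
  · rw [if_neg hd, if_neg (by omega), if_pos ⟨by omega, by omega⟩]
    field_simp
    ring


lemma one_sub_exp (θ : ℝ) :
    ‖1 - Complex.exp (-(θ:ℂ) * Complex.I)‖ = 2 * |Real.sin (θ / 2)| := by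
  have key : 1 - Complex.exp (-(θ:ℂ) * Complex.I)
      = Complex.exp (((-(θ/2) : ℝ) : ℂ) * Complex.I) *
        (2 * Complex.I * Complex.sin (((θ/2 : ℝ)) : ℂ)) := by
    have e1 : Complex.exp (((-(θ/2) : ℝ) : ℂ) * Complex.I) *
        Complex.exp ((((θ/2) : ℝ) : ℂ) * Complex.I) = 1 := by
      rw [← Complex.exp_add, ← Complex.exp_zero]
      congr 1
      push_cast
      ring
    have e2 : Complex.exp (((-(θ/2) : ℝ) : ℂ) * Complex.I) *
        Complex.exp ((-((θ/2) : ℝ) : ℂ) * Complex.I) = Complex.exp (-(θ:ℂ) * Complex.I) := by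
      rw [← Complex.exp_add]
      congr 1
      push_cast
      ring
    rw [Complex.sin]
    push_cast at e1 e2 ⊢
    linear_combination (-(Complex.I ^ 2)) * e2 + (Complex.I ^ 2) * e1 + (1 - Complex.exp (-(θ:ℂ) * Complex.I)) * Complex.I_sq
  rw [key, norm_mul, Complex.norm_exp_ofReal_mul_I, one_mul, ← Complex.ofReal_sin,
    norm_mul, norm_mul, Complex.norm_two, Complex.norm_I, Complex.norm_real, Real.norm_eq_abs]
  ring

lemma abs_c (n : ℕ) (hn : 0 < n) (ℓ : ℕ) (hℓ : ℓ < n) :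
    ‖c n ℓ‖ = s n ℓ := by
  have hne : (n : ℝ) ≠ 0 := Nat.cast_ne_zero.mpr hn.ne'
  have harg : w n ^ (-(2 * (ℓ:ℤ) + 1))
      = Complex.exp (-(((2 * ℓ + 1) * Real.pi / n : ℝ) : ℂ) * Complex.I) := by
    rw [w_zpow]
    congr 1
    push_cast
    field_simp
  have hsin := sin_pos n hn ℓ hℓ
  unfold c
  rw [harg, norm_div, one_sub_exp, norm_div, Complex.norm_two, Complex.norm_natCast]
  have hhalf : (2 * (ℓ:ℝ) + 1) * Real.pi / (n:ℝ) / 2 = (2 * ℓ + 1) * Real.pi / (2 * n) := by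
    ring
  rw [hhalf, abs_of_pos hsin]
  unfold s
  field_simp


noncomputable def Bmat (n : ℕ) : Matrix (Fin n) (Fin (n+1)) ℂ :=
  fun i => Fin.cons ((((Real.sqrt 2)⁻¹ : ℝ)) : ℂ)
    (fun ℓ => (((Real.sqrt 2)⁻¹ : ℝ) : ℂ) *
      (c n (ℓ:ℕ) / ((Real.sqrt (s n (ℓ:ℕ)) : ℝ) : ℂ)) * w n ^ ((2 * (ℓ:ℤ) + 1) * (i:ℤ)))

noncomputable def Cmat (n : ℕ) : Matrix (Fin (n+1)) (Fin n) ℂ :=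
  Fin.cons (fun _ => ((((Real.sqrt 2)⁻¹ : ℝ)) : ℂ))
    (fun ℓ j => (((Real.sqrt 2)⁻¹ : ℝ) : ℂ) * ((Real.sqrt (s n (ℓ:ℕ)) : ℝ) : ℂ) *
      w n ^ (-(2 * (ℓ:ℤ) + 1) * (j:ℤ)))

lemma half_mul : (((Real.sqrt 2)⁻¹ : ℝ) : ℂ) * (((Real.sqrt 2)⁻¹ : ℝ) : ℂ) = 1 / 2 := by
  rw [← Complex.ofReal_mul, ← mul_inv, Real.mul_self_sqrt (by norm_num : (0:ℝ) ≤ 2)]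
  norm_num

lemma fact (n : ℕ) (hn : 0 < n) (Mcount : Matrix (Fin n) (Fin n) ℂ)
    (hM : ∀ i j : Fin n, Mcount i j = if j ≤ i then 1 else 0) :
    Bmat n * Cmat n = Mcount := by
  have hw := w_ne_zero n
  ext i j
  rw [Matrix.mul_apply, hM, Fin.sum_univ_succ]
  have h0 : Bmat n i 0 * Cmat n 0 j = 1 / 2 := by
    simp only [Bmat, Cmat, Fin.cons_zero]
    exact half_mul
  have hterm : ∀ ℓ : Fin n, Bmat n i ℓ.succ * Cmat n ℓ.succ j
      = (1 / 2) * (c n (ℓ:ℕ) * w n ^ ((2 * (ℓ:ℤ) + 1) * ((i:ℤ) - (j:ℤ)))) := by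
    intro ℓ
    have hs := s_pos n hn (ℓ:ℕ) ℓ.isLt
    have hsr : ((Real.sqrt (s n (ℓ:ℕ)) : ℝ) : ℂ) ≠ 0 := by
      rw [Complex.ofReal_ne_zero]
      positivity
    simp only [Bmat, Cmat, Fin.cons_succ]
    trans ((((Real.sqrt 2)⁻¹ : ℝ) : ℂ) * (((Real.sqrt 2)⁻¹ : ℝ) : ℂ)) *
      ((c n (ℓ:ℕ) / ((Real.sqrt (s n (ℓ:ℕ)) : ℝ) : ℂ)) * ((Real.sqrt (s n (ℓ:ℕ)) : ℝ) : ℂ)) *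
      (w n ^ ((2 * (ℓ:ℤ) + 1) * (i:ℤ)) * w n ^ (-(2 * (ℓ:ℤ) + 1) * (j:ℤ)))
    · ring
    rw [half_mul, div_mul_cancel₀ _ hsr, ← zpow_add₀ hw,
      show (2 * (ℓ:ℤ) + 1) * (i:ℤ) + (-(2 * (ℓ:ℤ) + 1)) * (j:ℤ)
        = (2 * (ℓ:ℤ) + 1) * ((i:ℤ) - (j:ℤ)) by ring]
    ring
  simp only [h0, hterm]
  rw [← Finset.mul_sum, fourier n hn ((i:ℤ) - (j:ℤ))
    (by have := i.isLt; have := j.isLt; omega) (by have := i.isLt; have := j.isLt; omega)]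
  by_cases hij : j ≤ i
  · rw [if_pos hij, if_pos (by have := Fin.le_def.mp hij; omega)]
    norm_num
  · rw [if_neg hij, if_neg (by rw [Fin.le_def] at hij; omega)]
    norm_num

lemma normB_sq (n : ℕ) (hn : 0 < n) (i : Fin n) :
    ∑ j : Fin (n+1), ‖Bmat n i j‖ ^ 2 = (1 + ∑ ℓ : Fin n, s n ℓ) / 2 := by
  rw [Fin.sum_univ_succ]
  have h0 : ‖Bmat n i 0‖ ^ 2 = 1 / 2 := by
    simp only [Bmat, Fin.cons_zero, Complex.norm_real, Real.norm_eq_abs]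
    rw [_root_.sq_abs ((Real.sqrt 2)⁻¹), sq, ← mul_inv, Real.mul_self_sqrt (by norm_num : (0:ℝ) ≤ 2)]
    norm_num
  have hterm : ∀ ℓ : Fin n, ‖Bmat n i ℓ.succ‖ ^ 2 = s n (ℓ:ℕ) / 2 := by
    intro ℓ
    have hs := s_pos n hn (ℓ:ℕ) ℓ.isLt
    simp only [Bmat, Fin.cons_succ]
    rw [norm_mul, norm_mul, norm_div, Complex.norm_real, Complex.norm_real,
      norm_w_zpow, abs_c n hn (ℓ:ℕ) ℓ.isLt,
      Real.norm_eq_abs, Real.norm_eq_abs, abs_of_pos (by positivity),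
      abs_of_pos (Real.sqrt_pos.mpr hs), mul_one]
    rw [mul_pow, div_pow, Real.sq_sqrt hs.le, sq, ← mul_inv,
      Real.mul_self_sqrt (by norm_num : (0:ℝ) ≤ 2)]
    field_simp
  simp only [h0, hterm]
  rw [← Finset.sum_div]
  ring

lemma normC_sq (n : ℕ) (hn : 0 < n) (j : Fin n) :
    ∑ k : Fin (n+1), ‖Cmat n k j‖ ^ 2 = (1 + ∑ ℓ : Fin n, s n ℓ) / 2 := by
  rw [Fin.sum_univ_succ]
  have h0 : ‖Cmat n 0 j‖ ^ 2 = 1 / 2 := by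
    simp only [Cmat, Fin.cons_zero, Complex.norm_real, Real.norm_eq_abs]
    rw [_root_.sq_abs ((Real.sqrt 2)⁻¹), sq, ← mul_inv, Real.mul_self_sqrt (by norm_num : (0:ℝ) ≤ 2)]
    norm_num
  have hterm : ∀ ℓ : Fin n, ‖Cmat n ℓ.succ j‖ ^ 2 = s n (ℓ:ℕ) / 2 := by
    intro ℓ
    have hs := s_pos n hn (ℓ:ℕ) ℓ.isLt
    simp only [Cmat, Fin.cons_succ]
    rw [norm_mul, norm_mul, Complex.norm_real, Complex.norm_real,
      norm_w_zpow, Real.norm_eq_abs, Real.norm_eq_abs,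
      abs_of_pos (by positivity : (0:ℝ) < (Real.sqrt 2)⁻¹),
      abs_of_pos (Real.sqrt_pos.mpr hs), mul_one]
    rw [mul_pow, Real.sq_sqrt hs.le, sq, ← mul_inv,
      Real.mul_self_sqrt (by norm_num : (0:ℝ) ≤ 2)]
    ring
  simp only [h0, hterm]
  rw [← Finset.sum_div]
  ring

lemma rowB (n : ℕ) (hn : 0 < n) :
    rowNorm (Bmat n) = Real.sqrt ((1 + ∑ ℓ : Fin n, s n ℓ) / 2) := by
  haveI : Nonempty (Fin n) := Fin.pos_iff_nonempty.mp hn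
  unfold rowNorm
  simp only [normB_sq n hn]
  exact ciSup_const

lemma colC (n : ℕ) (hn : 0 < n) :
    colNorm (Cmat n) = Real.sqrt ((1 + ∑ ℓ : Fin n, s n ℓ) / 2) := by
  haveI : Nonempty (Fin n) := Fin.pos_iff_nonempty.mp hn
  unfold colNorm
  simp only [normC_sq n hn]
  exact ciSup_const

end Stmt8Aux

theorem stmt_8 (n : ℕ) (hn : 1 ≤ n)
    (Mcount : Matrix (Fin n) (Fin n) ℂ)
    (hM : ∀ i j : Fin n, Mcount i j = if j ≤ i then 1 else 0) :
    gamma2 Mcount ≤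
      1 / 2 + (1 / (2 * n : ℝ)) *
        ∑ ℓ ∈ Finset.Icc 1 n, |1 / Real.sin ((2 * ℓ - 1) * Real.pi / (2 * n))| := by
  have hn0 : 0 < n := hn
  have hne : (n : ℝ) ≠ 0 := Nat.cast_ne_zero.mpr hn0.ne'
  set S := ∑ ℓ : Fin n, Stmt8Aux.s n (ℓ : ℕ) with hSdef
  have hS0 : 0 ≤ S := Finset.sum_nonneg fun ℓ _ => (Stmt8Aux.s_pos n hn0 (ℓ:ℕ) ℓ.isLt).le
  have hQ0 : (0:ℝ) ≤ (1 + S) / 2 := by linarith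
  have hprod : rowNorm (Stmt8Aux.Bmat n) * colNorm (Stmt8Aux.Cmat n) = (1 + S) / 2 := by
    rw [Stmt8Aux.rowB n hn0, Stmt8Aux.colC n hn0]
    exact Real.mul_self_sqrt hQ0
  have hle : gamma2 Mcount ≤ (1 + S) / 2 := by
    apply csInf_le
    · refine ⟨0, ?_⟩
      rintro r ⟨m, B, C, -, rfl⟩
      exact mul_nonneg (Real.iSup_nonneg fun i => Real.sqrt_nonneg _)
        (Real.iSup_nonneg fun j => Real.sqrt_nonneg _)
    · exact ⟨n + 1, Stmt8Aux.Bmat n, Stmt8Aux.Cmat n,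
        Stmt8Aux.fact n hn0 Mcount hM, hprod.symm⟩
  refine hle.trans (le_of_eq ?_)
  have hA : ∑ ℓ ∈ Finset.Icc 1 n, |1 / Real.sin ((2 * ℓ - 1) * Real.pi / (2 * n))|
      = ∑ t ∈ Finset.range n, 1 / Real.sin ((2 * t + 1) * Real.pi / (2 * n)) := by
    refine Finset.sum_nbij' (fun ℓ => ℓ - 1) (fun t => t + 1) ?_ ?_ ?_ ?_ ?_
    · intro a ha
      simp only [Finset.mem_Icc] at ha
      simp only [Finset.mem_range]
      omega
    · intro a ha
      simp only [Finset.mem_range] at ha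
      simp only [Finset.mem_Icc]
      omega
    · intro a ha
      simp only [Finset.mem_Icc] at ha
      omega
    · intro a _
      omega
    · intro a ha
      rw [Finset.mem_Icc] at ha
      have hcast : ((a - 1 : ℕ) : ℝ) = (a : ℝ) - 1 := by
        push_cast [ha.1]
        ring
      have harg : (2 * (a:ℝ) - 1) = 2 * ((a - 1 : ℕ) : ℝ) + 1 := by
        rw [hcast]; ring
      rw [harg]
      have hsin := Stmt8Aux.sin_pos n hn0 (a - 1) (by omega)
      rw [abs_of_pos (by positivity)]
  rw [hA]
  have hS : S = ∑ t ∈ Finset.range n, Stmt8Aux.s n t := by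
    rw [hSdef, Fin.sum_univ_eq_sum_range (fun t => Stmt8Aux.s n t) n]
  have hfin : ∑ t ∈ Finset.range n, Stmt8Aux.s n t
      = (1 / (n:ℝ)) * ∑ t ∈ Finset.range n, 1 / Real.sin ((2 * t + 1) * Real.pi / (2 * n)) := by
    rw [Finset.mul_sum]
    apply Finset.sum_congr rfl
    intro t _
    unfold Stmt8Aux.s
    rw [div_eq_mul_one_div]
  rw [hS, hfin]
  set T := ∑ t ∈ Finset.range n, 1 / Real.sin ((2 * t + 1) * Real.pi / (2 * n)) with hT
  rw [show (1:ℝ)/(2*(n:ℝ)) = (1/(n:ℝ))/2 by rw [div_div, mul_comm]]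
  ring
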